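/- Let X and Y be nonempty metric spaces, let F : X → X and G : Y → Y be isometries, and equip X × Y with the ℓ²-product metric dist((x, y), (x', y')) = sqrt(dist(x, x')² + dist(y, y')²). Then the map H(x, y) = (F x, G y) is an isometry of X × Y, min(H) = sqrt(min(F)² + min(G)²), and Min(H) = Min(F) ×ˢ Min(G). -/

import Mathlib

/-!
The displacement of `H` at `(x, y)` is `√(dist x (F x) ^ 2 + dist y (G y) ^ 2)`. The map
`(a, b) ↦ √(a ^ 2 + b ^ 2)` is continuous and monotone in each nonnegative argument, so it
commutes with the infima over `X` and `Y`; it is strictly monotone there, so its value at the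
pair of minima is attained only when both coordinates are minimal.
-/

open Set

theorem ciInf_prod_add {α β G : Type*} [Nonempty α] [Nonempty β]
    [ConditionallyCompleteLattice G] [AddGroup G] [AddLeftMono G] [AddRightMono G]
    {u : α → G} {v : β → G} (hu : BddBelow (range u)) (hv : BddBelow (range v)) :
    ⨅ q : α × β, (u q.1 + v q.2) = (⨅ a, u a) + ⨅ b, v b := by
  obtain ⟨m, hm⟩ := hu
  obtain ⟨n, hn⟩ := hv
  have hbdd : BddBelow (range fun q : α × β => u q.1 + v q.2) :=
    ⟨m + n, forall_mem_range.2 fun q =>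
      add_le_add (hm (mem_range_self _)) (hn (mem_range_self _))⟩
  exact le_antisymm (le_ciInf_add_ciInf fun a b => ciInf_le hbdd (a, b))
    (le_ciInf fun q => add_le_add (ciInf_le ⟨m, hm⟩ _) (ciInf_le ⟨n, hn⟩ _))

namespace Real

section Infimum

variable {α β : Type*} [Nonempty α] [Nonempty β]

theorem sqrt_ciInf {f : α → ℝ} (hf : BddBelow (range f)) : √(⨅ a, f a) = ⨅ a, √(f a) :=
  Monotone.map_ciInf_of_continuousAt continuous_sqrt.continuousAt sqrt_monotone hf

theorem sq_ciInf_of_nonneg {f : α → ℝ} (hf : ∀ a, 0 ≤ f a) :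
    (⨅ a, f a) ^ 2 = ⨅ a, f a ^ 2 := by
  rw [← sq_sqrt (iInf_nonneg fun a => sq_nonneg (f a)),
    sqrt_ciInf ⟨0, forall_mem_range.2 fun a => sq_nonneg (f a)⟩]
  simp only [sqrt_sq (hf _)]

theorem ciInf_sqrt_sq_add_sq {f : α → ℝ} {g : β → ℝ} (hf : ∀ a, 0 ≤ f a)
    (hg : ∀ b, 0 ≤ g b) :
    ⨅ q : α × β, √(f q.1 ^ 2 + g q.2 ^ 2) = √((⨅ a, f a) ^ 2 + (⨅ b, g b) ^ 2) := by
  rw [sq_ciInf_of_nonneg hf, sq_ciInf_of_nonneg hg,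
    ← ciInf_prod_add ⟨0, forall_mem_range.2 fun a => sq_nonneg (f a)⟩
      ⟨0, forall_mem_range.2 fun b => sq_nonneg (g b)⟩,
    sqrt_ciInf ⟨0, forall_mem_range.2 fun q => by positivity⟩]

end Infimum

theorem sqrt_sq_add_sq_eq_iff {a b A B : ℝ} (hA : 0 ≤ A) (hB : 0 ≤ B) (ha : A ≤ a)
    (hb : B ≤ b) : √(a ^ 2 + b ^ 2) = √(A ^ 2 + B ^ 2) ↔ a = A ∧ b = B := by
  refine ⟨fun h => ?_, fun ⟨rfl, rfl⟩ => rfl⟩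
  rw [sqrt_inj (by positivity) (by positivity)] at h
  constructor <;> nlinarith

end Real

section Displacement

variable {X : Type*} [PseudoMetricSpace X]

/-- `min(F)` in the paper's notation; `minDisplacementSet F` is `Min(F)`. -/
noncomputable def minDisplacement (F : X → X) : ℝ := ⨅ x, dist x (F x)

def minDisplacementSet (F : X → X) : Set X := {x | dist x (F x) = minDisplacement F}

theorem minDisplacement_nonneg (F : X → X) : 0 ≤ minDisplacement F :=
  Real.iInf_nonneg fun _ => dist_nonneg

theorem minDisplacement_le (F : X → X) (x : X) : minDisplacement F ≤ dist x (F x) :=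
  ciInf_le ⟨0, forall_mem_range.2 fun _ => dist_nonneg⟩ x

end Displacement

namespace WithLp

open scoped ENNReal

theorem isometry_map_prodMap {X Y X' Y' : Type*} [PseudoEMetricSpace X] [PseudoEMetricSpace Y]
    [PseudoEMetricSpace X'] [PseudoEMetricSpace Y'] {p : ℝ≥0∞} [Fact (1 ≤ p)]
    {F : X → X'} {G : Y → Y'} (hF : Isometry F) (hG : Isometry G) :
    Isometry (WithLp.map p (Prod.map F G)) := by
  intro q r
  rcases eq_or_ne p ∞ with rfl | hp
  · simp [prod_edist_eq_sup, hF.edist_eq, hG.edist_eq]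
  · have hp₀ : 0 < p.toReal := ENNReal.toReal_pos (zero_lt_one.trans_le Fact.out).ne' hp
    simp [prod_edist_eq_add hp₀, hF.edist_eq, hG.edist_eq]

variable {X Y : Type*} [PseudoMetricSpace X] [PseudoMetricSpace Y] (F : X → X) (G : Y → Y)

theorem dist_map_prodMap_self (q : WithLp 2 (X × Y)) :
    dist q (WithLp.map 2 (Prod.map F G) q) =
      √(dist q.fst (F q.fst) ^ 2 + dist q.snd (G q.snd) ^ 2) := by
  rw [prod_dist_eq_add (by norm_num), Real.sqrt_eq_rpow]
  norm_num

variable [Nonempty X] [Nonempty Y]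

theorem minDisplacement_map_prodMap :
    minDisplacement (WithLp.map 2 (Prod.map F G)) =
      √(minDisplacement F ^ 2 + minDisplacement G ^ 2) := by
  rw [minDisplacement, ← (WithLp.equiv 2 (X × Y)).symm.iInf_comp]
  simp only [dist_map_prodMap_self, equiv_symm_apply, toLp_fst, toLp_snd]
  exact Real.ciInf_sqrt_sq_add_sq (f := fun x => dist x (F x)) (g := fun y => dist y (G y))
    (fun _ => dist_nonneg) (fun _ => dist_nonneg)

theorem minDisplacementSet_map_prodMap :
    minDisplacementSet (WithLp.map 2 (Prod.map F G)) =
      toLp 2 '' (minDisplacementSet F ×ˢ minDisplacementSet G) := by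
  ext q
  rw [← WithLp.equiv_symm_apply, Equiv.image_eq_preimage_symm]
  simp only [minDisplacementSet, mem_ofPred_eq, dist_map_prodMap_self,
    minDisplacement_map_prodMap,
    Real.sqrt_sq_add_sq_eq_iff (minDisplacement_nonneg F) (minDisplacement_nonneg G)
      (minDisplacement_le F _) (minDisplacement_le G _)]
  rfl

end WithLp

/-- Let `F` and `G` be isometries of nonempty metric spaces `X` and `Y`, and
equip `X × Y` with the `ℓ²`-product metric (realized as `WithLp 2 (X × Y)`).
Then `H (x, y) = (F x, G y)` is an isometry with
`min H = sqrt (min F ^ 2 + min G ^ 2)` and `Min H = Min F ×ˢ Min G`. -/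
theorem min_prod_isometry {X Y : Type*} [MetricSpace X] [MetricSpace Y]
    [Nonempty X] [Nonempty Y]
    (F : X → X) (hF : ∀ x y, dist (F x) (F y) = dist x y)
    (G : Y → Y) (hG : ∀ x y, dist (G x) (G y) = dist x y)
    (H : WithLp 2 (X × Y) → WithLp 2 (X × Y))
    (hH : ∀ p : WithLp 2 (X × Y), H p = (WithLp.equiv 2 (X × Y)).symm
      (F ((WithLp.equiv 2 (X × Y)) p).1, G ((WithLp.equiv 2 (X × Y)) p).2)) :
    (∀ p q : WithLp 2 (X × Y), dist (H p) (H q) = dist p q) ∧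
    (⨅ p : WithLp 2 (X × Y), dist p (H p)) =
      Real.sqrt ((⨅ x : X, dist x (F x)) ^ 2 + (⨅ y : Y, dist y (G y)) ^ 2) ∧
    {p : WithLp 2 (X × Y) | dist p (H p) = ⨅ q : WithLp 2 (X × Y), dist q (H q)} =
      (WithLp.equiv 2 (X × Y)).symm ''
        ({x : X | dist x (F x) = ⨅ x' : X, dist x' (F x')} ×ˢ
         {y : Y | dist y (G y) = ⨅ y' : Y, dist y' (G y')}) := by
  obtain rfl : H = WithLp.map 2 (Prod.map F G) := funext hH
  have hFG : Isometry (WithLp.map 2 (Prod.map F G)) :=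
    WithLp.isometry_map_prodMap (isometry_iff_dist_eq.2 hF) (isometry_iff_dist_eq.2 hG)
  exact ⟨hFG.dist_eq,
    WithLp.minDisplacement_map_prodMap F G, WithLp.minDisplacementSet_map_prodMap F G⟩
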